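/- arXiv:2503.12362 — 3 statements merged into one kernel-verified Lean document; each statement's English description precedes it below -/
import Mathlib

section
/- Let N ≥ 2 and let θ₁,...,θ_N be real numbers with max θ - min θ = D_θ < π. Fix indices i, j achieving the max and min respectively (θ_i - θ_j = D_θ). Let ψ_{pq} ≥ 0 and d_p > 0 be given weights, and set C = min over pairs p ≠ q of [ψ_{pq}/d_p + ψ_{qp}/d_q + Σ_{k ≠ p,q} min{ψ_{pk}/d_p, ψ_{qk}/d_q}]. Then Σ_{k=1}^N [(ψ_{ik}/d_i)·sin(θ_k - θ_i) - (ψ_{jk}/d_j)·sin(θ_k - θ_j)] ≤ -C · sin(D_θ). -/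
open Real Finset

theorem my_sin_add_le (a b : ℝ) (ha : 0 ≤ a) (hb : 0 ≤ b) (hab : a + b ≤ π) :
    Real.sin (a + b) ≤ Real.sin a + Real.sin b := by
  have hsa : 0 ≤ Real.sin a := Real.sin_nonneg_of_nonneg_of_le_pi ha (by linarith)
  have hsb : 0 ≤ Real.sin b := Real.sin_nonneg_of_nonneg_of_le_pi hb (by linarith)
  rw [Real.sin_add]
  nlinarith [Real.cos_le_one a, Real.cos_le_one b]

/-- The key dissipation estimate: at indices realizing the phase diameter `Dθ < π`,
the asymmetric coupling term is bounded by `-C sin Dθ`, where `C` is the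
connectivity constant of the network. -/
theorem coupling_dissipation_at_extremes (n : ℕ) (θ : Fin (n + 2) → ℝ)
    (ψ : Fin (n + 2) → Fin (n + 2) → ℝ) (d : Fin (n + 2) → ℝ) (C Dθ : ℝ)
    (i j : Fin (n + 2))
    (hψ : ∀ p q, 0 ≤ ψ p q) (hd : ∀ p, 0 < d p)
    (hmax : ∀ k, θ k ≤ θ i) (hmin : ∀ k, θ j ≤ θ k)
    (hD : Dθ = θ i - θ j) (hDπ : Dθ < π)
    (hC : C = ((Finset.univ ×ˢ Finset.univ).filter
        (fun pq : Fin (n + 2) × Fin (n + 2) => pq.1 ≠ pq.2)).inf'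
        ⟨(0, 1), by simp⟩
        (fun pq => ψ pq.1 pq.2 / d pq.1 + ψ pq.2 pq.1 / d pq.2 +
          ∑ k ∈ Finset.univ.filter (fun k => k ≠ pq.1 ∧ k ≠ pq.2),
            min (ψ pq.1 k / d pq.1) (ψ pq.2 k / d pq.2))) :
    ∑ k, (ψ i k / d i * Real.sin (θ k - θ i) - ψ j k / d j * Real.sin (θ k - θ j))
      ≤ -C * Real.sin Dθ := by
  have hDnn : 0 ≤ Dθ := by have := hmin i; rw [hD]; linarith
  have hs : 0 ≤ Real.sin Dθ := Real.sin_nonneg_of_nonneg_of_le_pi hDnn hDπ.le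
  rcases eq_or_ne i j with hij | hij
  · subst hij
    have h0 : Dθ = 0 := by rw [hD]; ring
    rw [h0]
    simp
  · set F := ψ i j / d i + ψ j i / d j + ∑ k ∈ Finset.univ.filter (fun k => k ≠ i ∧ k ≠ j),
      min (ψ i k / d i) (ψ j k / d j) with hF
    have hCF : C ≤ F := by
      have hmem : ((i, j) : Fin (n + 2) × Fin (n + 2)) ∈
          (Finset.univ ×ˢ Finset.univ).filter
            (fun pq : Fin (n + 2) × Fin (n + 2) => pq.1 ≠ pq.2) := by
        simpa using hij
      rw [hC, hF]
      exact Finset.inf'_le _ hmem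
    set c : Fin (n + 2) → ℝ := fun k =>
      if k = i then ψ j i / d j else if k = j then ψ i j / d i
      else min (ψ i k / d i) (ψ j k / d j) with hc
    have hsum_c : ∑ k, c k = F := by
      rw [← Finset.sum_filter_add_sum_filter_not Finset.univ (fun k => k ≠ i ∧ k ≠ j)]
      have h1 : Finset.univ.filter (fun k : Fin (n+2) => ¬(k ≠ i ∧ k ≠ j)) = {i, j} := by
        ext k; simp; tauto
      have h2 : ∑ k ∈ Finset.univ.filter (fun k : Fin (n+2) => k ≠ i ∧ k ≠ j), c k
          = ∑ k ∈ Finset.univ.filter (fun k : Fin (n+2) => k ≠ i ∧ k ≠ j),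
            min (ψ i k / d i) (ψ j k / d j) := by
        refine Finset.sum_congr rfl fun k hk => ?_
        simp only [Finset.mem_filter] at hk
        simp [hc, hk.2.1, hk.2.2]
      have hci : c i = ψ j i / d j := by simp [hc]
      have hcj : c j = ψ i j / d i := by simp [hc, Ne.symm hij]
      rw [h1, h2, Finset.sum_pair hij, hci, hcj, hF]
      ring
    have hpt : ∀ k, ψ i k / d i * Real.sin (θ k - θ i) - ψ j k / d j * Real.sin (θ k - θ j)
        ≤ -(c k) * Real.sin Dθ := by
      intro k
      rcases eq_or_ne k i with hk | hki
      · subst hk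
        have h1 : θ k - θ j = Dθ := by rw [hD]
        rw [sub_self, Real.sin_zero, mul_zero, h1]
        simp [hc]
      · rcases eq_or_ne k j with hk | hkj
        · subst hk
          have h1 : θ k - θ i = -Dθ := by rw [hD]; ring
          rw [sub_self, Real.sin_zero, mul_zero, h1, Real.sin_neg]
          simp [hc, hki]
        · have hcke : c k = min (ψ i k / d i) (ψ j k / d j) := by simp [hc, hki, hkj]
          set a := θ i - θ k with hA
          set b := θ k - θ j with hB
          have ha : 0 ≤ a := by have := hmax k; simp [hA]; linarith
          have hb : 0 ≤ b := by have := hmin k; simp [hB]; linarith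
          have hab : a + b = Dθ := by rw [hD, hA, hB]; ring
          have haπ : a ≤ π := by linarith
          have hbπ : b ≤ π := by linarith
          have hsa : 0 ≤ Real.sin a := Real.sin_nonneg_of_nonneg_of_le_pi ha haπ
          have hsb : 0 ≤ Real.sin b := Real.sin_nonneg_of_nonneg_of_le_pi hb hbπ
          have hsum : Real.sin Dθ ≤ Real.sin a + Real.sin b := by
            rw [← hab]; exact my_sin_add_le a b ha hb (by linarith)
          have h1 : θ k - θ i = -a := by rw [hA]; ring
          have h2 : θ k - θ j = b := rfl
          have hm0 : 0 ≤ c k := by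
            rw [hcke]
            exact le_min (div_nonneg (hψ i k) (hd i).le) (div_nonneg (hψ j k) (hd j).le)
          have hm1 : c k ≤ ψ i k / d i := hcke ▸ min_le_left _ _
          have hm2 : c k ≤ ψ j k / d j := hcke ▸ min_le_right _ _
          rw [h1, Real.sin_neg]
          nlinarith
    calc ∑ k, (ψ i k / d i * Real.sin (θ k - θ i) - ψ j k / d j * Real.sin (θ k - θ j))
        ≤ ∑ k, -(c k) * Real.sin Dθ := Finset.sum_le_sum fun k _ => hpt k
      _ = -F * Real.sin Dθ := by
          rw [← Finset.sum_mul, Finset.sum_neg_distrib, hsum_c]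
      _ ≤ -C * Real.sin Dθ := by nlinarith
end

section
/- Let γ > 0 and let D_θ, D_ω, D_a : J → ℝ be nonnegative differentiable functions on an interval J satisfying: (i) γ·D_θ'' + D_θ' ≤ A - B·D_θ with |D_θ''| ≤ D_a, (ii) γ·D_ω' + D_ω ≤ A + c₁·D_θ, (iii) γ·D_a' + D_a ≤ c₂·D_ω, where A, B, c₁, c₂ > 0. Define E(t) = D_θ(t) + λγ·D_ω(t) + 2γ²·D_a(t) with λ > 0. If λ·c₁ ≤ B/2, λ ≥ 8γ·c₂, λγ ≤ 1, λ·(A) ≤ A, λγ ≤ 1/(2c₂)·(B/(B)), γ ≤ λ/(4c₂), λγ·(B/2) ≤ B/2 and 2γ²·(B/2) ≤ γ, then E'(t) ≤ 2A - (B/2)·E(t) on J. -/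
open Real

/-- Abstract form of Lemma 3.5: from the coupled differential inequalities for the
phase, frequency and acceleration diameters, the energy
`E = D_θ + λγ D_ω + 2γ² D_a` satisfies the scalar Gronwall inequality
`E' ≤ 2A - (B/2) E`, under the smallness conditions on the parameters. -/
theorem energy_gronwall_inequality (γ A B c₁ c₂ lam : ℝ) (J : Set ℝ)
    (Dθ Dω Da Dθ' Dω' Da' Dθ'' : ℝ → ℝ)
    (hγ : 0 < γ) (hA : 0 < A) (hB : 0 < B) (hc₁ : 0 < c₁) (hc₂ : 0 < c₂)
    (hlam0 : 0 < lam) (hlam1 : lam ≤ 1)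
    (hcond1 : lam * c₁ ≤ B / 2)
    (hcond2 : 8 * γ * c₂ ≤ lam)
    (hcond3 : lam * γ ≤ 1)
    (hcond4 : 2 * γ ^ 2 * (B / 2) ≤ γ)
    (hDθ : ∀ t ∈ J, HasDerivAt Dθ (Dθ' t) t)
    (hDθ2 : ∀ t ∈ J, HasDerivAt Dθ' (Dθ'' t) t)
    (hDω : ∀ t ∈ J, HasDerivAt Dω (Dω' t) t)
    (hDa : ∀ t ∈ J, HasDerivAt Da (Da' t) t)
    (hnn : ∀ t ∈ J, 0 ≤ Dθ t ∧ 0 ≤ Dω t ∧ 0 ≤ Da t)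
    (hi : ∀ t ∈ J, γ * Dθ'' t + Dθ' t ≤ A - B * Dθ t)
    (hi' : ∀ t ∈ J, |Dθ'' t| ≤ Da t)
    (hii : ∀ t ∈ J, γ * Dω' t + Dω t ≤ A + c₁ * Dθ t)
    (hiii : ∀ t ∈ J, γ * Da' t + Da t ≤ c₂ * Dω t) :
    ∀ t ∈ J, Dθ' t + lam * γ * Dω' t + 2 * γ ^ 2 * Da' t
      ≤ 2 * A - B / 2 * (Dθ t + lam * γ * Dω t + 2 * γ ^ 2 * Da t) := by
  intro t ht
  obtain ⟨hθn, hωn, han⟩ := hnn t ht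
  have h1 := hi t ht
  have h2 := (abs_le.mp (hi' t ht)).1
  have h3 := hii t ht
  have h4 := hiii t ht
  -- piece 1: Dθ' ≤ A - B Dθ + γ Da
  have p1 : Dθ' t ≤ A - B * Dθ t + γ * Da t := by nlinarith
  -- piece 2: lam γ Dω' ≤ lam A + lam c₁ Dθ - lam Dω
  have p2 : lam * γ * Dω' t ≤ lam * A + lam * c₁ * Dθ t - lam * Dω t := by nlinarith
  -- piece 3: 2γ² Da' ≤ 2γ c₂ Dω - 2γ Da
  have p3 : 2 * γ ^ 2 * Da' t ≤ 2 * γ * c₂ * Dω t - 2 * γ * Da t := by nlinarith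
  have hγB : γ * B ≤ 1 := by nlinarith
  have hcoef : B / 2 * (lam * γ) + 2 * γ * c₂ ≤ lam := by nlinarith [mul_le_mul_of_nonneg_left hγB hlam0.le]
  nlinarith [mul_nonneg hθn (sub_nonneg.mpr hcond1),
    mul_nonneg hωn (sub_nonneg.mpr hcoef),
    mul_nonneg han (sub_nonneg.mpr hcond4)]
end

section
/- Let θ ∈ ℝ^N with diameter D_θ ≤ D^∞, α_{pk} ∈ [0, ᾱ], and D^∞ + ᾱ < π/2. Fix indices p, q attaining the max and min of ω ∈ ℝ^N (so ω_p - ω_q = D_ω). Let C = min_{i≠j}[ψ_{ij}/d_i + ψ_{ji}/d_j + Σ_{k≠i,j} min{ψ_{ik}/d_i, ψ_{jk}/d_j}] > 0. Then (K/N)·Σ_k (ψ_{pk}/d_p)·cos(θ_k - θ_p + α_{pk})·(ω_k - ω_p) - (K/N)·Σ_k (ψ_{qk}/d_q)·cos(θ_k - θ_q + α_{qk})·(ω_k - ω_q) ≤ -(K·C·cos(D^∞ + ᾱ)/N)·D_ω. -/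
open Real Finset

/-- Dissipation estimate for the frequency diameter: at indices `p, q` attaining the
max and min frequency, with all phases within `D^∞` of each other and frustrations at
most `ᾱ` where `D^∞ + ᾱ < π/2`, the coupling term is bounded by
`-(K C cos(D^∞ + ᾱ)/N) D_ω`. -/
theorem frequency_dissipation_at_extremes (n : ℕ) (θ ω : Fin (n + 2) → ℝ)
    (ψ : Fin (n + 2) → Fin (n + 2) → ℝ) (d : Fin (n + 2) → ℝ)
    (α : Fin (n + 2) → Fin (n + 2) → ℝ) (K C Dinf abar Dω : ℝ)
    (p q : Fin (n + 2))
    (hK : 0 < K) (hψ : ∀ r s, 0 ≤ ψ r s) (hd : ∀ r, 0 < d r)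
    (hθ : ∀ k l, |θ k - θ l| ≤ Dinf)
    (hα : ∀ r s, 0 ≤ α r s ∧ α r s ≤ abar)
    (hfr : Dinf + abar < π / 2)
    (hp : ∀ k, ω k ≤ ω p) (hq : ∀ k, ω q ≤ ω k)
    (hDω : Dω = ω p - ω q)
    (hCpos : 0 < C)
    (hC : C = ((Finset.univ ×ˢ Finset.univ).filter
        (fun pr : Fin (n + 2) × Fin (n + 2) => pr.1 ≠ pr.2)).inf'
        ⟨(0, 1), by simp⟩
        (fun pr => ψ pr.1 pr.2 / d pr.1 + ψ pr.2 pr.1 / d pr.2 +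
          ∑ k ∈ Finset.univ.filter (fun k => k ≠ pr.1 ∧ k ≠ pr.2),
            min (ψ pr.1 k / d pr.1) (ψ pr.2 k / d pr.2))) :
    K / (n + 2) * ∑ k, ψ p k / d p * Real.cos (θ k - θ p + α p k) * (ω k - ω p)
      - K / (n + 2) * ∑ k, ψ q k / d q * Real.cos (θ k - θ q + α q k) * (ω k - ω q)
      ≤ -(K * C * Real.cos (Dinf + abar) / (n + 2)) * Dω := by
  have hpi := Real.pi_pos
  have hDinf : 0 ≤ Dinf := le_trans (abs_nonneg _) (hθ p p)
  have habar : 0 ≤ abar := (hα p p).1.trans (hα p p).2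
  set c := Real.cos (Dinf + abar) with hc
  have hcpos : 0 < c := Real.cos_pos_of_mem_Ioo ⟨by linarith, hfr⟩
  have hcos : ∀ r s, c ≤ Real.cos (θ s - θ r + α r s) := by
    intro r s
    have h1 : |θ s - θ r + α r s| ≤ Dinf + abar := by
      have h2 := abs_le.1 (hθ s r)
      have h3 := (hα r s).1
      have h4 := (hα r s).2
      rw [abs_le]; constructor <;> linarith [h2.1, h2.2]
    have := Real.cos_le_cos_of_nonneg_of_le_pi (abs_nonneg (θ s - θ r + α r s))
      (by linarith) h1
    rwa [Real.cos_abs] at this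
  rcases eq_or_ne p q with hpq | hpq
  · subst hpq
    rw [hDω, sub_self, sub_self, mul_zero]
  -- main case p ≠ q
  have hDωnn : 0 ≤ Dω := by rw [hDω]; linarith [hq p]
  -- pointwise cosine bounds
  have hA : ∀ k, ψ p k / d p * Real.cos (θ k - θ p + α p k) * (ω k - ω p)
      ≤ c * (ψ p k / d p * (ω k - ω p)) := by
    intro k
    have hx : ω k - ω p ≤ 0 := by linarith [hp k]
    have hψd : 0 ≤ ψ p k / d p := div_nonneg (hψ p k) (hd p).le
    nlinarith [mul_nonpos_of_nonneg_of_nonpos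
      (mul_nonneg hψd (sub_nonneg.2 (hcos p k))) hx]
  have hB : ∀ k, c * (ψ q k / d q * (ω k - ω q))
      ≤ ψ q k / d q * Real.cos (θ k - θ q + α q k) * (ω k - ω q) := by
    intro k
    have hy : 0 ≤ ω k - ω q := by linarith [hq k]
    have hψd : 0 ≤ ψ q k / d q := div_nonneg (hψ q k) (hd q).le
    nlinarith [mul_nonneg (mul_nonneg hψd (sub_nonneg.2 (hcos q k))) hy]
  set f : Fin (n + 2) → ℝ :=
    fun k => ψ p k / d p * (ω k - ω p) - ψ q k / d q * (ω k - ω q) with hf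
  set s := Finset.univ.filter (fun k => k ≠ p ∧ k ≠ q) with hs
  set C' := ψ p q / d p + ψ q p / d q +
    ∑ k ∈ s, min (ψ p k / d p) (ψ q k / d q) with hC'
  have hqns : q ∉ s := by simp [hs]
  have hpns : p ∉ insert q s := by simp [hs, hpq]
  have huniv : (Finset.univ : Finset (Fin (n + 2))) = insert p (insert q s) := by
    ext k; by_cases h1 : k = p <;> by_cases h2 : k = q <;> simp [hs, h1, h2]
  have hsum : ∑ k, f k ≤ -C' * Dω := by
    rw [huniv, Finset.sum_insert hpns, Finset.sum_insert hqns]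
    have hfp : f p = -(ψ q p / d q) * Dω := by simp only [hf]; rw [hDω]; ring
    have hfq : f q = -(ψ p q / d p) * Dω := by simp only [hf]; rw [hDω]; ring
    have hterm : ∀ k ∈ s, f k ≤ -(min (ψ p k / d p) (ψ q k / d q)) * Dω := by
      intro k hk
      have hx : ω k - ω p ≤ 0 := by linarith [hp k]
      have hy : 0 ≤ ω k - ω q := by linarith [hq k]
      have h1 : min (ψ p k / d p) (ψ q k / d q) ≤ ψ p k / d p := min_le_left _ _
      have h2 : min (ψ p k / d p) (ψ q k / d q) ≤ ψ q k / d q := min_le_right _ _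
      have hD : Dω = (ω p - ω k) + (ω k - ω q) := by rw [hDω]; ring
      simp only [hf]
      rw [hD]
      nlinarith [mul_nonpos_of_nonneg_of_nonpos (sub_nonneg.2 h1) hx,
        mul_nonneg (sub_nonneg.2 h2) hy]
    have hssum : ∑ k ∈ s, f k ≤ ∑ k ∈ s, -(min (ψ p k / d p) (ψ q k / d q)) * Dω :=
      Finset.sum_le_sum hterm
    have : ∑ k ∈ s, -(min (ψ p k / d p) (ψ q k / d q)) * Dω
        = -(∑ k ∈ s, min (ψ p k / d p) (ψ q k / d q)) * Dω := by
      rw [← Finset.sum_mul, Finset.sum_neg_distrib]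
    rw [this] at hssum
    rw [hfp, hfq, hC']
    linarith
  have hCle : C ≤ C' := by
    rw [hC]
    have hmem : (p, q) ∈ (Finset.univ ×ˢ Finset.univ).filter
        (fun pr : Fin (n + 2) × Fin (n + 2) => pr.1 ≠ pr.2) := by
      simp [hpq]
    exact Finset.inf'_le _ hmem
  have hT : ∑ k, f k ≤ -C * Dω := by
    calc ∑ k, f k ≤ -C' * Dω := hsum
      _ ≤ -C * Dω := by
          apply mul_le_mul_of_nonneg_right _ hDωnn
          linarith
  -- combine
  have hAB : (∑ k, ψ p k / d p * Real.cos (θ k - θ p + α p k) * (ω k - ω p))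
      - (∑ k, ψ q k / d q * Real.cos (θ k - θ q + α q k) * (ω k - ω q))
      ≤ c * (-C * Dω) := by
    have h1 : (∑ k, ψ p k / d p * Real.cos (θ k - θ p + α p k) * (ω k - ω p))
        ≤ ∑ k, c * (ψ p k / d p * (ω k - ω p)) :=
      Finset.sum_le_sum (fun k _ => hA k)
    have h2 : (∑ k, c * (ψ q k / d q * (ω k - ω q)))
        ≤ ∑ k, ψ q k / d q * Real.cos (θ k - θ q + α q k) * (ω k - ω q) :=
      Finset.sum_le_sum (fun k _ => hB k)
    have h3 : (∑ k, c * (ψ p k / d p * (ω k - ω p)))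
        - (∑ k, c * (ψ q k / d q * (ω k - ω q))) = c * ∑ k, f k := by
      rw [← Finset.mul_sum, ← Finset.mul_sum, ← mul_sub, ← Finset.sum_sub_distrib]
    have h4 : c * ∑ k, f k ≤ c * (-C * Dω) :=
      mul_le_mul_of_nonneg_left hT hcpos.le
    linarith
  have hKN : 0 ≤ K / (n + 2 : ℝ) := by positivity
  have := mul_le_mul_of_nonneg_left hAB hKN
  calc K / (n + 2) * ∑ k, ψ p k / d p * Real.cos (θ k - θ p + α p k) * (ω k - ω p)
      - K / (n + 2) * ∑ k, ψ q k / d q * Real.cos (θ k - θ q + α q k) * (ω k - ω q)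
      = K / (n + 2) *
        ((∑ k, ψ p k / d p * Real.cos (θ k - θ p + α p k) * (ω k - ω p))
        - (∑ k, ψ q k / d q * Real.cos (θ k - θ q + α q k) * (ω k - ω q))) := by ring
    _ ≤ K / (n + 2) * (c * (-C * Dω)) := this
    _ = -(K * C * c / (n + 2)) * Dω := by ring
end
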